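/- arXiv:1807.06000 — 3 statements merged into one kernel-verified Lean document; each statement's English description precedes it below -/
import Mathlib

section
/- If D is a decomposition space, then its edgewise subdivision sd(D) is a Segal simplicial set, i.e. for every n ≥ 2 the canonical map (sd D)_n → (sd D)_1 ×_{(sd D)_0} ⋯ ×_{(sd D)_0} (sd D)_1 induced by the n chain inclusions [1] → [n] is a bijection; equivalently, sd(D) is isomorphic to the nerve of a category. -/
open CategoryTheory CategoryTheory.Limits Opposite Simplicial

namespace DecompPaper

def IsActive {a b : SimplexCategory} (f : a ⟶ b) : Prop :=
  f.toOrderHom 0 = 0 ∧ f.toOrderHom (Fin.last a.len) = Fin.last b.len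

def IsInert {a b : SimplexCategory} (f : a ⟶ b) : Prop :=
  ∀ i : Fin a.len, (f.toOrderHom i.succ : ℕ) = (f.toOrderHom i.castSucc : ℕ) + 1

def IsTopPres {a b : SimplexCategory} (f : a ⟶ b) : Prop :=
  f.toOrderHom (Fin.last a.len) = Fin.last b.len

def IsDecomp (X : SSet.{0}) : Prop :=
  ∀ ⦃a b c d : SimplexCategory⦄ (f : a ⟶ b) (g : a ⟶ c) (h : b ⟶ d) (k : c ⟶ d),
    IsActive f → IsInert g → IsPushout f g h k →
      IsPullback (X.map h.op) (X.map k.op) (X.map f.op) (X.map g.op)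

def IsCULF {Y X : SSet.{0}} (F : Y ⟶ X) : Prop :=
  ∀ ⦃a b : SimplexCategory⦄ (g : a ⟶ b), IsActive g →
    IsPullback (Y.map g.op) (F.app (op b)) (F.app (op a)) (X.map g.op)

def IsRightFib {Y X : SSet.{0}} (F : Y ⟶ X) : Prop :=
  ∀ n : ℕ,
    IsPullback (Y.map (SimplexCategory.δ (0 : Fin (n + 2))).op)
      (F.app (op (SimplexCategory.mk (n + 1)))) (F.app (op (SimplexCategory.mk n)))
      (X.map (SimplexCategory.δ (0 : Fin (n + 2))).op)

/-! ### The edgewise subdivision functor `Q` -/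

def natApp {m n : ℕ} (f : Fin (m + 1) →o Fin (n + 1)) (t : ℕ) : ℕ :=
  (f ⟨min t m, Nat.lt_succ_of_le (min_le_right t m)⟩ : ℕ)

lemma natApp_le {m n : ℕ} (f : Fin (m + 1) →o Fin (n + 1)) (t : ℕ) : natApp f t ≤ n :=
  Nat.lt_succ_iff.mp (f _).isLt

lemma natApp_mono {m n : ℕ} (f : Fin (m + 1) →o Fin (n + 1)) {s t : ℕ} (h : s ≤ t) :
    natApp f s ≤ natApp f t :=
  f.monotone (by simp only [Fin.mk_le_mk]; omega)

lemma natApp_of_le {m n : ℕ} (f : Fin (m + 1) →o Fin (n + 1)) {t : ℕ} (h : t ≤ m) :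
    natApp f t = (f ⟨t, by omega⟩ : ℕ) := by
  have harg : (⟨min t m, Nat.lt_succ_of_le (min_le_right t m)⟩ : Fin (m + 1)) = ⟨t, by omega⟩ :=
    Fin.ext (Nat.min_eq_left h)
  unfold natApp
  rw [harg]

lemma natApp_comp {l m n : ℕ} (f : Fin (l + 1) →o Fin (m + 1)) (g : Fin (m + 1) →o Fin (n + 1))
    (t : ℕ) : natApp (g.comp f) t = natApp g (natApp f t) := by
  have h : natApp f t ≤ m := natApp_le f t
  rw [natApp_of_le g h]
  unfold natApp
  rfl

def Qfun {m n : ℕ} (f : Fin (m + 1) →o Fin (n + 1)) : Fin (2 * m + 2) → Fin (2 * n + 2) :=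
  fun i =>
    if (i : ℕ) ≤ m then ⟨n - natApp f (m - (i : ℕ)), by omega⟩
    else ⟨n + 1 + natApp f ((i : ℕ) - (m + 1)), by have := natApp_le f ((i : ℕ) - (m + 1)); omega⟩

lemma Qfun_val_le {m n : ℕ} (f : Fin (m + 1) →o Fin (n + 1)) (i : Fin (2 * m + 2))
    (h : (i : ℕ) ≤ m) : (Qfun f i : ℕ) = n - natApp f (m - (i : ℕ)) := by
  unfold Qfun; rw [if_pos h]

lemma Qfun_val_gt {m n : ℕ} (f : Fin (m + 1) →o Fin (n + 1)) (i : Fin (2 * m + 2))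
    (h : ¬ (i : ℕ) ≤ m) : (Qfun f i : ℕ) = n + 1 + natApp f ((i : ℕ) - (m + 1)) := by
  unfold Qfun; rw [if_neg h]

lemma Qfun_monotone {m n : ℕ} (f : Fin (m + 1) →o Fin (n + 1)) : Monotone (Qfun f) := by
  intro i j hij
  have hij' : (i : ℕ) ≤ (j : ℕ) := hij
  rw [Fin.le_def]
  by_cases hi : (i : ℕ) ≤ m <;> by_cases hj : (j : ℕ) ≤ m
  · rw [Qfun_val_le f i hi, Qfun_val_le f j hj]
    have h1 := natApp_mono f (show m - (j : ℕ) ≤ m - (i : ℕ) by omega)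
    have h2 := natApp_le f (m - (i : ℕ))
    omega
  · rw [Qfun_val_le f i hi, Qfun_val_gt f j hj]
    omega
  · omega
  · rw [Qfun_val_gt f i hi, Qfun_val_gt f j hj]
    have h1 := natApp_mono f (show (i : ℕ) - (m + 1) ≤ (j : ℕ) - (m + 1) by omega)
    omega

def Q : SimplexCategory ⥤ SimplexCategory where
  obj a := SimplexCategory.mk (2 * a.len + 1)
  map {a b} f := SimplexCategory.Hom.mk ⟨Qfun f.toOrderHom, Qfun_monotone f.toOrderHom⟩
  map_id a := by
    apply SimplexCategory.Hom.ext
    apply OrderHom.ext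
    funext i
    apply Fin.ext
    show (Qfun (SimplexCategory.Hom.toOrderHom (𝟙 a)) i : ℕ) = (i : ℕ)
    have hi : (i : ℕ) < 2 * a.len + 2 := i.isLt
    have hid : ∀ t : ℕ, natApp (SimplexCategory.Hom.toOrderHom (𝟙 a)) t = min t a.len :=
      fun t => rfl
    by_cases h : (i : ℕ) ≤ a.len
    · rw [Qfun_val_le _ i h, hid]; omega
    · rw [Qfun_val_gt _ i h, hid]; omega
  map_comp {a b c} f g := by
    apply SimplexCategory.Hom.ext
    apply OrderHom.ext
    funext i
    apply Fin.ext
    show (Qfun (SimplexCategory.Hom.toOrderHom (f ≫ g)) i : ℕ)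
        = (Qfun g.toOrderHom (Qfun f.toOrderHom i) : ℕ)
    have hi : (i : ℕ) < 2 * a.len + 2 := i.isLt
    have h2 : SimplexCategory.Hom.toOrderHom (f ≫ g)
        = g.toOrderHom.comp f.toOrderHom := rfl
    rw [h2]
    by_cases h : (i : ℕ) ≤ a.len
    · have hA := natApp_le f.toOrderHom (a.len - (i : ℕ))
      have hfi : ((Qfun f.toOrderHom i : Fin (2 * b.len + 2)) : ℕ) ≤ b.len := by
        rw [Qfun_val_le _ i h]; omega
      rw [Qfun_val_le _ i h, Qfun_val_le _ _ hfi, Qfun_val_le _ i h, natApp_comp]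
      rw [show b.len - (b.len - natApp f.toOrderHom (a.len - (i : ℕ)))
          = natApp f.toOrderHom (a.len - (i : ℕ)) by omega]
    · have hA := natApp_le f.toOrderHom ((i : ℕ) - (a.len + 1))
      have hfi : ¬ ((Qfun f.toOrderHom i : Fin (2 * b.len + 2)) : ℕ) ≤ b.len := by
        rw [Qfun_val_gt _ i h]; omega
      rw [Qfun_val_gt _ i h, Qfun_val_gt _ _ hfi, Qfun_val_gt _ i h, natApp_comp]
      rw [show b.len + 1 + natApp f.toOrderHom ((i : ℕ) - (a.len + 1)) - (b.len + 1)
          = natApp f.toOrderHom ((i : ℕ) - (a.len + 1)) by omega]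

/-- Edgewise subdivision of simplicial sets: precomposition with `Qᵒᵖ`. -/
def sdF : SSet.{0} ⥤ SSet.{0} :=
  (Functor.whiskeringLeft SimplexCategoryᵒᵖ SimplexCategoryᵒᵖ (Type 0)).obj Q.op

/-- The unique active map `[1] ⟶ [m]`. -/
def act1 (m : ℕ) : SimplexCategory.mk 1 ⟶ SimplexCategory.mk m :=
  SimplexCategory.Hom.mk
    ⟨fun i => if (i : ℕ) = 0 then ⟨0, by omega⟩ else Fin.last m, by
      intro i j hij
      by_cases h : (i : ℕ) = 0
      · by_cases h' : (j : ℕ) = 0 <;> simp [h, h', Fin.le_def]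
      · have : (j : ℕ) ≠ 0 := by have := Fin.le_def.mp hij; omega
        simp [h, this]⟩

/-- The vertex `t` as a map `[0] ⟶ [n]`. -/
def vert (n : ℕ) (t : Fin (n + 1)) : SimplexCategory.mk 0 ⟶ SimplexCategory.mk n :=
  SimplexCategory.Hom.mk (OrderHom.const _ t)

/-- The `i`-th edge inclusion `[1] ⟶ [n]`. -/
def edgeIncl (n : ℕ) (i : Fin n) : SimplexCategory.mk 1 ⟶ SimplexCategory.mk n :=
  SimplexCategory.Hom.mk
    ⟨fun j => ⟨(i : ℕ) + (j : ℕ), by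
        have h1 := i.isLt
        have h2 := j.isLt
        simp only [SimplexCategory.len_mk] at h2 ⊢
        omega⟩, by
      intro x y h
      have := Fin.le_def.mp h
      simp only [Fin.mk_le_mk]
      omega⟩

/-- The set of chains of `k` composable edges in a simplicial set. -/
def SegalChains (X : SSet.{0}) (k : ℕ) : Type :=
  {p : Fin k → X.obj (op (SimplexCategory.mk 1)) //
    ∀ i j : Fin k, (j : ℕ) = (i : ℕ) + 1 →
      X.map (vert 1 1).op (p i) = X.map (vert 1 0).op (p j)}

/-- The spine (Segal) map from `k`-simplices to chains of `k` edges. -/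
def spine (X : SSet.{0}) (k : ℕ) (σ : X.obj (op (SimplexCategory.mk k))) : SegalChains X k :=
  ⟨fun i => X.map (edgeIncl k i).op σ, by
    intro i j hij
    have h1 : vert 1 1 ≫ edgeIncl k i = vert 1 0 ≫ edgeIncl k j := by
      apply SimplexCategory.Hom.ext
      apply OrderHom.ext
      funext z
      apply Fin.ext
      show ((edgeIncl k i).toOrderHom ((vert 1 1).toOrderHom z) : ℕ)
          = ((edgeIncl k j).toOrderHom ((vert 1 0).toOrderHom z) : ℕ)
      show ((i : ℕ) + ((1 : Fin 2) : ℕ)) = ((j : ℕ) + ((0 : Fin 2) : ℕ))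
      simp
      omega
    calc X.map (vert 1 1).op (X.map (edgeIncl k i).op σ)
        = X.map ((vert 1 1 ≫ edgeIncl k i).op) σ := by
          rw [op_comp, FunctorToTypes.map_comp_apply]
      _ = X.map ((vert 1 0 ≫ edgeIncl k j).op) σ := by rw [h1]
      _ = X.map (vert 1 0).op (X.map (edgeIncl k j).op σ) := by
          rw [op_comp, FunctorToTypes.map_comp_apply]⟩


/-! ### The category of decomposition spaces and CULF maps -/

lemma IsCULF.id (X : SSet.{0}) : IsCULF (𝟙 X) := by
  intro a b g hg
  have : (𝟙 X : X ⟶ X).app (op b) = 𝟙 (X.obj (op b)) := rfl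
  refine IsPullback.of_vert_isIso ⟨by simp⟩

lemma IsCULF.comp {X Y Z : SSet.{0}} {f : X ⟶ Y} {g : Y ⟶ Z} (hf : IsCULF f) (hg : IsCULF g) :
    IsCULF (f ≫ g) := by
  intro a b s hs
  simpa using (hf s hs).paste_vert (hg s hs)

/-- The category of decomposition spaces and CULF maps. -/
structure DecompCat : Type 1 where
  X : SSet.{0}
  decomp : IsDecomp X

instance : Category.{0} DecompCat where
  Hom A B := {f : A.X ⟶ B.X // IsCULF f}
  id A := ⟨𝟙 A.X, IsCULF.id A.X⟩
  comp f g := ⟨f.1 ≫ g.1, f.2.comp g.2⟩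
  id_comp f := Subtype.ext (Category.id_comp f.1)
  comp_id f := Subtype.ext (Category.comp_id f.1)
  assoc f g h := Subtype.ext (Category.assoc f.1 g.1 h.1)

/-! ### Discrete fibrations -/

/-- A functor is a discrete fibration if every morphism into the image of an object
has a unique lift with that object as codomain. -/
def IsDiscreteFibration {E C : Type*} [Category E] [Category C] (p : E ⥤ C) : Prop :=
  ∀ (y : E) (c : C) (f : c ⟶ p.obj y),
    ∃! g : Σ x : E, x ⟶ y, ∃ h : p.obj g.1 = c, p.map g.2 = eqToHom h ≫ f

/-- The category of discrete fibrations over `T`, with morphisms the functors over `T`. -/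
structure DFibOver (T : Type) [SmallCategory T] : Type 1 where
  E : Type
  [cat : SmallCategory E]
  p : E ⥤ T
  fib : IsDiscreteFibration p

attribute [instance] DFibOver.cat

instance {T : Type} [SmallCategory T] : Category.{0} (DFibOver T) where
  Hom A B := {G : A.E ⥤ B.E // G ⋙ B.p = A.p}
  id A := ⟨𝟭 A.E, Functor.id_comp A.p⟩
  comp f g := ⟨f.1 ⋙ g.1, by rw [Functor.assoc, g.2, f.2]⟩
  id_comp f := Subtype.ext (Functor.id_comp f.1)
  comp_id f := Subtype.ext (Functor.comp_id f.1)
  assoc f g h := Subtype.ext (Functor.assoc f.1 g.1 h.1)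

/-! ### The category of elements of a simplicial set -/

/-- The category of elements of a simplicial set `X`: objects are simplices of `X`;
a morphism `(m, τ) ⟶ (n, σ)` is a map `f : [m] ⟶ [n]` of `Δ` with `X(f)(σ) = τ`. -/
structure El (X : SSet.{0}) : Type where
  n : ℕ
  σ : X.obj (op (SimplexCategory.mk n))

instance (X : SSet.{0}) : SmallCategory (El X) where
  Hom a b := {f : SimplexCategory.mk a.n ⟶ SimplexCategory.mk b.n // X.map f.op b.σ = a.σ}
  id a := ⟨𝟙 _, by simp⟩
  comp {a b c} f g := ⟨f.1 ≫ g.1, by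
    rw [op_comp, FunctorToTypes.map_comp_apply, g.2, f.2]⟩
  id_comp f := Subtype.ext (Category.id_comp f.1)
  comp_id f := Subtype.ext (Category.comp_id f.1)
  assoc f g h := Subtype.ext (Category.assoc f.1 g.1 h.1)

/-- Functoriality of the category of elements in the simplicial set. -/
def elMap {X Y : SSet.{0}} (f : X ⟶ Y) : El X ⥤ El Y where
  obj e := ⟨e.n, f.app _ e.σ⟩
  map {a b} g := ⟨g.1, by
    have h := NatTrans.naturality_apply f g.1.op b.σ
    dsimp only
    rw [← h, g.2]⟩
  map_id a := Subtype.ext rfl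
  map_comp f g := Subtype.ext rfl

/-- The functor `ω_X : el(sd X) ⥤ el(X)` lying over `Q`. -/
def elSd (X : SSet.{0}) : El (sdF.obj X) ⥤ El X where
  obj e := ⟨2 * e.n + 1, e.σ⟩
  map {a b} g := ⟨Q.map g.1, g.2⟩
  map_id a := Subtype.ext (Q.map_id _)
  map_comp f g := Subtype.ext (Q.map_comp f.1 g.1)

/-- The objects (dimensions) of the chain in `Δ` underlying a `k`-simplex of the nerve of
the category of elements. -/
def chainObj {X : SSet.{0}} {k : ℕ} (F : ComposableArrows (El X) k) : Fin (k + 1) → ℕ :=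
  fun i => (F.obj i).n

/-- The consecutive maps in `Δ` underlying a `k`-simplex of the nerve of the category of
elements. -/
def chainMap {X : SSet.{0}} {k : ℕ} (F : ComposableArrows (El X) k) :
    ∀ i : Fin k, SimplexCategory.mk (chainObj F i.castSucc) ⟶
      SimplexCategory.mk (chainObj F i.succ) :=
  fun i => (F.map (homOfLE (Fin.castSucc_lt_succ (i := i)).le)).1

/-! ### Ladders -/

/-- `IsLadderA n f α` says that `α` is a commutative ladder from the chain of maps
`Q(d⊤) : Q[i] ⟶ Q[i+1]` to the chain `f` with all vertical maps `α i : Q[i] ⟶ [n i]`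
active. -/
def IsLadderA {k : ℕ} (n : Fin (k + 1) → ℕ)
    (f : ∀ i : Fin k, SimplexCategory.mk (n i.castSucc) ⟶ SimplexCategory.mk (n i.succ))
    (α : ∀ i : Fin (k + 1), Q.obj (SimplexCategory.mk (i : ℕ)) ⟶ SimplexCategory.mk (n i)) :
    Prop :=
  (∀ i, IsActive (α i)) ∧
    ∀ i : Fin k, Q.map (SimplexCategory.δ (Fin.last ((i : ℕ) + 1))) ≫ α i.succ
      = α i.castSucc ≫ f i

/-- `IsLadderB n f β` says that `β` is a commutative ladder from the chain of top coface maps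
`d⊤ : [i] ⟶ [i+1]` to the chain `f` with all vertical maps `β i : [i] ⟶ [n i]`
top-preserving. -/
def IsLadderB {k : ℕ} (n : Fin (k + 1) → ℕ)
    (f : ∀ i : Fin k, SimplexCategory.mk (n i.castSucc) ⟶ SimplexCategory.mk (n i.succ))
    (β : ∀ i : Fin (k + 1), SimplexCategory.mk (i : ℕ) ⟶ SimplexCategory.mk (n i)) : Prop :=
  (∀ i, IsTopPres (β i)) ∧
    ∀ i : Fin k, SimplexCategory.δ (Fin.last ((i : ℕ) + 1)) ≫ β i.succ = β i.castSucc ≫ f i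

/-- `IsLambda Λ` says that the family of simplicial maps `Λ X : N(el X) ⟶ sd X` is,
in each degree, given by sending a `k`-simplex `([n₀] → ⋯ → [n_k], σ)` to `X(α_k)(σ)`,
where `α_k : Q[k] ⟶ [n_k]` is the last vertical map of the (unique) active ladder over the
underlying chain in `Δ`. -/
def IsLambda (Λ : ∀ X : SSet.{0}, nerve (El X) ⟶ sdF.obj X) : Prop :=
  ∀ (X : SSet.{0}) (k : ℕ) (F : ComposableArrows (El X) k),
    ∃ α, IsLadderA (chainObj F) (chainMap F) α ∧
      (Λ X).app (op (SimplexCategory.mk k)) F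
        = X.map (α (Fin.last k)).op (F.obj (Fin.last k)).σ

/-! ### The last-segment inclusion and `cod` -/

/-- The last-segment inclusion `[n] ⟶ Q[n] = [2n+1]`. -/
def Lhom (a : SimplexCategory) : a ⟶ Q.obj a :=
  SimplexCategory.Hom.mk
    ⟨fun i => ⟨a.len + 1 + (i : ℕ), by
        have h : (i : ℕ) < a.len + 1 := i.isLt
        exact show a.len + 1 + (i : ℕ) < 2 * a.len + 1 + 1 by omega⟩,
      by intro i j hle; show a.len + 1 + (i : ℕ) ≤ a.len + 1 + (j : ℕ); have := Fin.le_def.mp hle; omega⟩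

/-- The natural transformation `id ⇒ Q` given by the last-segment inclusions
`[n] ⟶ [2n+1]`. -/
def Lnat : 𝟭 SimplexCategory ⟶ Q where
  app := Lhom
  naturality a b f := by
    apply SimplexCategory.Hom.ext
    apply OrderHom.ext
    funext i
    apply Fin.ext
    have hi : (i : ℕ) < a.len + 1 := i.isLt
    have h1 : (SimplexCategory.Hom.toOrderHom ((𝟭 SimplexCategory).map f ≫ Lhom b) i : ℕ)
        = b.len + 1 + (f.toOrderHom i : ℕ) := rfl
    have h4 : ((Lhom a).toOrderHom i : ℕ) = a.len + 1 + (i : ℕ) := rfl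
    have key : (SimplexCategory.Hom.toOrderHom (Lhom a ≫ Q.map f) i : ℕ)
        = b.len + 1 + (f.toOrderHom i : ℕ) := by
      have h3 : ¬ ((Lhom a).toOrderHom i : ℕ) ≤ a.len := by omega
      have h5 : (SimplexCategory.Hom.toOrderHom (Lhom a ≫ Q.map f) i : ℕ)
          = (Qfun f.toOrderHom ((Lhom a).toOrderHom i) : ℕ) := rfl
      rw [h5, Qfun_val_gt f.toOrderHom _ h3, h4,
        show a.len + 1 + (i : ℕ) - (a.len + 1) = (i : ℕ) by omega,
        natApp_of_le f.toOrderHom (show (i : ℕ) ≤ a.len by omega)]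
      exact congrArg (fun z : Fin (a.len + 1) => b.len + 1 + (f.toOrderHom z : ℕ))
        (Fin.ext rfl)
    exact h1.trans key.symm

/-- The map `cod_X : sd(X) ⟶ X` induced by the last-segment inclusions. -/
def codN (X : SSet.{0}) : sdF.obj X ⟶ X := Functor.whiskerRight (NatTrans.op Lnat) X

/-! ### Strict pullbacks of categories -/

/-- The strict pullback of a functor `p` along a functor `G`. -/
structure StrictPB {A B C : Type} [SmallCategory A] [SmallCategory B] [SmallCategory C]
    (G : A ⥤ C) (p : B ⥤ C) : Type where
  pt : A
  fib : B
  eq : p.obj fib = G.obj pt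

instance {A B C : Type} [SmallCategory A] [SmallCategory B] [SmallCategory C]
    (G : A ⥤ C) (p : B ⥤ C) : SmallCategory (StrictPB G p) where
  Hom x y := {fg : (x.pt ⟶ y.pt) × (x.fib ⟶ y.fib) //
    p.map fg.2 = eqToHom x.eq ≫ G.map fg.1 ≫ eqToHom y.eq.symm}
  id x := ⟨(𝟙 x.pt, 𝟙 x.fib), by simp⟩
  comp {x y z} f g := ⟨(f.1.1 ≫ g.1.1, f.1.2 ≫ g.1.2), by
    rw [p.map_comp, f.2, g.2, G.map_comp]
    simp⟩
  id_comp f := Subtype.ext (Prod.ext (Category.id_comp f.1.1) (Category.id_comp f.1.2))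
  comp_id f := Subtype.ext (Prod.ext (Category.comp_id f.1.1) (Category.comp_id f.1.2))
  assoc f g h := Subtype.ext (Prod.ext (Category.assoc _ _ _) (Category.assoc _ _ _))

/-- Projection of the strict pullback to the base. -/
def pbProj {A B C : Type} [SmallCategory A] [SmallCategory B] [SmallCategory C]
    (G : A ⥤ C) (p : B ⥤ C) : StrictPB G p ⥤ A where
  obj x := x.pt
  map f := f.1.1
  map_id x := rfl
  map_comp f g := rfl

/-!
Write `Q⦋n⦌ = [2n+1]` as `n' < ⋯ < 0' < 0 < ⋯ < n`. The spine decomposition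
`[n+1] = [n] ∪_{[0]} [1]` is not a pushout in `Δ`, but its image under `Q` is: `Q⦋n+1⦌` is
`Q⦋n⦌` (the middle block) glued to `Q⦋1⦌ = {1' < 0' < 0 < 1}` (the four points
`(n+1)' < n' < n < n+1`) along `Q⦋0⦌ = {0' < 0}`, which goes to the two ends of `Q⦋n⦌`
(an active map) and to the two middle points of `Q⦋1⦌` (an inert map). The decomposition
axiom therefore gives `(sd D)ₙ₊₁ ≅ (sd D)ₙ ×_{(sd D)₀} (sd D)₁`, and the Segal condition follows
by induction on `n`.

A Segal simplicial set `X` is the nerve of the category whose objects are its vertices and whose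
morphisms are its edges; two edges compose to the long edge of the unique 2-simplex they span,
and associativity is read off the 3-simplex spanned by three composable edges.
-/

open SimplexCategory SSet

lemma hom_ext_val {a b : SimplexCategory} {f g : a ⟶ b}
    (h : ∀ i, (f.toOrderHom i : ℕ) = (g.toOrderHom i : ℕ)) : f = g :=
  Hom.ext _ _ (OrderHom.ext _ _ (funext fun i => Fin.ext (h i)))

lemma vert_eq_const (n : ℕ) (t : Fin (n + 1)) : vert n t = const ⦋0⦌ ⦋n⦌ t := rfl

lemma edgeIncl_eq_mkOfSucc {n : ℕ} (i : Fin n) : edgeIncl n i = mkOfSucc i :=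
  Hom.ext_one_left _ _

lemma mkOfSucc_eq_mkOfLe {n : ℕ} (i : Fin n) :
    mkOfSucc i = mkOfLe i.castSucc i.succ i.castSucc_le_succ :=
  Hom.ext_one_left _ _

lemma mkOfLe_comp {m n : ℕ} (i j : Fin (m + 1)) (h : i ≤ j) (f : ⦋m⦌ ⟶ ⦋n⦌) :
    mkOfLe i j h ≫ f = mkOfLe (f.toOrderHom i) (f.toOrderHom j) (f.toOrderHom.monotone h) :=
  Hom.ext_one_left _ _

lemma δ_last_apply {n : ℕ} (x : Fin (n + 1)) : ((δ (Fin.last (n + 1))).toOrderHom x : ℕ) = x :=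
  congrArg Fin.val (Fin.succAbove_last_apply x)

lemma δ_one_eq_const : δ (1 : Fin 2) = const ⦋0⦌ ⦋1⦌ 0 := Hom.ext_zero_left _ _

lemma δ_zero_eq_const : δ (0 : Fin 2) = const ⦋0⦌ ⦋1⦌ 1 := Hom.ext_zero_left _ _

lemma δ_one_mkOfLe {n : ℕ} (i j : Fin (n + 1)) (h : i ≤ j) :
    δ 1 ≫ mkOfLe i j h = const ⦋0⦌ ⦋n⦌ i :=
  Hom.ext_zero_left _ _

lemma δ_zero_mkOfLe {n : ℕ} (i j : Fin (n + 1)) (h : i ≤ j) :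
    δ 0 ≫ mkOfLe i j h = const ⦋0⦌ ⦋n⦌ j :=
  Hom.ext_zero_left _ _

lemma δ_two_mkOfLeComp {n : ℕ} (i j k : Fin (n + 1)) (hij : i ≤ j) (hjk : j ≤ k) :
    δ 2 ≫ mkOfLeComp i j k hij hjk = mkOfLe i j hij :=
  Hom.ext_one_left _ _

lemma δ_zero_mkOfLeComp {n : ℕ} (i j k : Fin (n + 1)) (hij : i ≤ j) (hjk : j ≤ k) :
    δ 0 ≫ mkOfLeComp i j k hij hjk = mkOfLe j k hjk :=
  Hom.ext_one_left _ _

lemma δ_one_mkOfLeComp {n : ℕ} (i j k : Fin (n + 1)) (hij : i ≤ j) (hjk : j ≤ k) :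
    δ 1 ≫ mkOfLeComp i j k hij hjk = mkOfLe i k (hij.trans hjk) :=
  Hom.ext_one_left _ _

lemma map_map_apply {X : SSet.{0}} {a b c : SimplexCategory} (f : a ⟶ b) (g : b ⟶ c)
    (x : X.obj (op c)) : X.map f.op (X.map g.op x) = X.map (f ≫ g).op x := by
  rw [op_comp, Functor.map_comp_apply]

lemma val_apply_eq_natApp {m k : ℕ} (f : Fin (m + 1) →o Fin (k + 1)) (x : Fin (m + 1)) {t : ℕ}
    (h : (x : ℕ) = t) : (f x : ℕ) = natApp f t := by
  subst h
  rw [natApp_of_le f (Nat.lt_succ_iff.mp x.isLt)]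

lemma natApp_le_natApp_last {m k : ℕ} (f : Fin (m + 1) →o Fin (k + 1)) (t : ℕ) :
    natApp f t ≤ natApp f m :=
  f.monotone (Fin.mk_le_mk.mpr ((min_le_right t m).trans (min_self m).ge))

section QValues

lemma Q_map_apply_of_le {m n : ℕ} (f : ⦋m⦌ ⟶ ⦋n⦌) (x : Fin ((Q.obj ⦋m⦌).len + 1))
    (h : (x : ℕ) ≤ m) :
    ((Q.map f).toOrderHom x : ℕ) = n - f.toOrderHom ⟨m - x, Nat.lt_succ_of_le (Nat.sub_le m x)⟩ :=
  (Qfun_val_le _ x h).trans (by rw [natApp_of_le _ (Nat.sub_le m x)])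

lemma Q_map_apply_of_gt {m n : ℕ} (f : ⦋m⦌ ⟶ ⦋n⦌) (x : Fin ((Q.obj ⦋m⦌).len + 1))
    (h : m < x) :
    ((Q.map f).toOrderHom x : ℕ) =
      n + 1 + f.toOrderHom ⟨x - (m + 1), by
        have : (x : ℕ) < 2 * m + 2 := x.isLt
        show _ < m + 1
        omega⟩ :=
  (Qfun_val_gt _ x (Nat.not_le.mpr h)).trans (by
    have : (x : ℕ) < 2 * m + 2 := x.isLt
    rw [natApp_of_le _ (show (x : ℕ) - (m + 1) ≤ m by omega)])

variable {n : ℕ}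

lemma Q_map_const_last_apply (x : Fin ((Q.obj ⦋0⦌).len + 1)) :
    ((Q.map (const ⦋0⦌ ⦋n⦌ (Fin.last n))).toOrderHom x : ℕ) = x * (2 * n + 1) := by
  have : (x : ℕ) < 2 := x.isLt
  rcases Nat.lt_or_ge 0 x with h | h
  · rw [Q_map_apply_of_gt _ _ h, const_apply, Fin.val_last, show (x : ℕ) = 1 by omega]; omega
  · rw [Q_map_apply_of_le _ _ h, const_apply, Fin.val_last, show (x : ℕ) = 0 by omega]; omega

lemma Q_map_const_zero_apply (x : Fin ((Q.obj ⦋0⦌).len + 1)) :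
    ((Q.map (const ⦋0⦌ ⦋1⦌ 0)).toOrderHom x : ℕ) = x + 1 := by
  fin_cases x <;> rfl

lemma Q_map_δ_last_apply (x : Fin ((Q.obj ⦋n⦌).len + 1)) :
    ((Q.map (δ (Fin.last (n + 1)))).toOrderHom x : ℕ) = x + 1 := by
  have : (x : ℕ) < 2 * n + 2 := x.isLt
  rcases Nat.lt_or_ge n x with h | h
  · rw [Q_map_apply_of_gt _ _ h, δ_last_apply, Fin.val_mk]; omega
  · rw [Q_map_apply_of_le _ _ h, δ_last_apply, Fin.val_mk]; omega

lemma Q_map_mkOfSucc_last_apply (x : Fin ((Q.obj ⦋1⦌).len + 1)) :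
    ((Q.map (mkOfSucc (Fin.last n))).toOrderHom x : ℕ) =
      if (x : ℕ) ≤ 1 then (x : ℕ) else x + 2 * n := by
  have hval (y : Fin 2) : ((mkOfSucc (Fin.last n)).toOrderHom y : ℕ) = n + y := by
    fin_cases y <;> rfl
  have : (x : ℕ) < 4 := x.isLt
  rcases Nat.lt_or_ge 1 x with h | h
  · rw [Q_map_apply_of_gt _ _ h, hval, Fin.val_mk, if_neg (by omega)]; omega
  · rw [Q_map_apply_of_le _ _ h, hval, Fin.val_mk, if_pos h]; omega

lemma natApp_Q_map_δ_last {t : ℕ} (ht : t ≤ 2 * n + 1) :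
    natApp (Q.map (δ (Fin.last (n + 1)))).toOrderHom t = t + 1 :=
  (val_apply_eq_natApp _ ⟨t, Nat.lt_succ_of_le ht⟩ rfl).symm.trans (Q_map_δ_last_apply _)

lemma natApp_Q_map_mkOfSucc_last {t : ℕ} (ht : t ≤ 3) :
    natApp (Q.map (mkOfSucc (Fin.last n))).toOrderHom t = if t ≤ 1 then t else t + 2 * n :=
  (val_apply_eq_natApp _ ⟨t, Nat.lt_succ_of_le ht⟩ rfl).symm.trans (Q_map_mkOfSucc_last_apply _)

lemma isActive_Q_map_const_last : IsActive (Q.map (const ⦋0⦌ ⦋n⦌ (Fin.last n))) :=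
  ⟨Fin.ext ((Q_map_const_last_apply 0).trans (zero_mul _)),
    Fin.ext ((Q_map_const_last_apply 1).trans (one_mul _))⟩

lemma isInert_Q_map_const_zero : IsInert (Q.map (const ⦋0⦌ ⦋1⦌ 0)) := fun i => by
  rw [Q_map_const_zero_apply, Q_map_const_zero_apply, Fin.val_succ, Fin.val_castSucc]

end QValues

section Pushout
variable {n : ℕ} {c : SimplexCategory} {u : Q.obj ⦋n⦌ ⟶ c} {v : Q.obj ⦋1⦌ ⟶ c}

lemma natApp_eq_of_pushout_condition
    (w : Q.map (const ⦋0⦌ ⦋n⦌ (Fin.last n)) ≫ u = Q.map (const ⦋0⦌ ⦋1⦌ 0) ≫ v) :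
    natApp u.toOrderHom 0 = natApp v.toOrderHom 1 ∧
      natApp u.toOrderHom (2 * n + 1) = natApp v.toOrderHom 2 := by
  have key (x : Fin ((Q.obj ⦋0⦌).len + 1)) :
      natApp u.toOrderHom (x * (2 * n + 1)) = natApp v.toOrderHom (x + 1) := by
    have : (u.toOrderHom ((Q.map (const ⦋0⦌ ⦋n⦌ (Fin.last n))).toOrderHom x) : ℕ) =
        v.toOrderHom ((Q.map (const ⦋0⦌ ⦋1⦌ 0)).toOrderHom x) :=
      congrArg Fin.val (congr_toOrderHom_apply w x)
    rwa [val_apply_eq_natApp _ _ (Q_map_const_last_apply x),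
      val_apply_eq_natApp _ _ (Q_map_const_zero_apply x)] at this
  exact ⟨by simpa using key ⟨0, Nat.zero_lt_two⟩, by simpa using key ⟨1, Nat.one_lt_two⟩⟩

/-- The gluing of `u` on the middle block `[1, 2n+2]` of `Q⦋n+1⦌ = [2n+3]` with `v` on its two
ends, through the clamped extensions `natApp` so that monotonicity is arithmetic. -/
def pushoutDescVal (u : Q.obj ⦋n⦌ ⟶ c) (v : Q.obj ⦋1⦌ ⟶ c) (j : ℕ) : ℕ :=
  if j = 0 then natApp v.toOrderHom 0
  else if j ≤ 2 * n + 2 then natApp u.toOrderHom (j - 1) else natApp v.toOrderHom 3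

lemma pushoutDescVal_mono
    (w : Q.map (const ⦋0⦌ ⦋n⦌ (Fin.last n)) ≫ u = Q.map (const ⦋0⦌ ⦋1⦌ 0) ≫ v)
    {i j : ℕ} (hij : i ≤ j) : pushoutDescVal u v i ≤ pushoutDescVal u v j := by
  obtain ⟨h₀, h₁⟩ := natApp_eq_of_pushout_condition w
  have := natApp_mono v.toOrderHom zero_le_one
  have := natApp_mono v.toOrderHom (show 2 ≤ 3 by omega)
  have := natApp_mono u.toOrderHom (Nat.zero_le (i - 1))
  have := natApp_mono u.toOrderHom (Nat.zero_le (j - 1))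
  have := natApp_mono u.toOrderHom (Nat.sub_le_sub_right hij 1)
  have : natApp u.toOrderHom (i - 1) ≤ natApp u.toOrderHom (2 * n + 1) :=
    natApp_le_natApp_last _ _
  unfold pushoutDescVal
  split_ifs <;> omega

def pushoutDesc (w : Q.map (const ⦋0⦌ ⦋n⦌ (Fin.last n)) ≫ u = Q.map (const ⦋0⦌ ⦋1⦌ 0) ≫ v) :
    Q.obj ⦋n + 1⦌ ⟶ c :=
  Hom.mk ⟨fun j => ⟨pushoutDescVal u v j, by
      unfold pushoutDescVal; split_ifs <;> exact Nat.lt_succ_of_le (natApp_le _ _)⟩,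
    fun _ _ hij => pushoutDescVal_mono w hij⟩

lemma natApp_eq_pushoutDescVal (m : Q.obj ⦋n + 1⦌ ⟶ c) {j : ℕ} (hj : j ≤ 2 * n + 3) :
    natApp m.toOrderHom j = pushoutDescVal (Q.map (δ (Fin.last (n + 1))) ≫ m)
      (Q.map (mkOfSucc (Fin.last n)) ≫ m) j := by
  unfold pushoutDescVal
  simp only [comp_toOrderHom, natApp_comp]
  split_ifs with h₀ h₁
  · rw [natApp_Q_map_mkOfSucc_last (by omega), if_pos (by omega), h₀]
  · rw [natApp_Q_map_δ_last (by omega)]; congr; omega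
  · rw [natApp_Q_map_mkOfSucc_last le_rfl, if_neg (by omega)]; congr; omega

variable (w : Q.map (const ⦋0⦌ ⦋n⦌ (Fin.last n)) ≫ u = Q.map (const ⦋0⦌ ⦋1⦌ 0) ≫ v)
include w

lemma Q_map_δ_last_comp_pushoutDesc : Q.map (δ (Fin.last (n + 1))) ≫ pushoutDesc w = u := by
  refine hom_ext_val fun x => ?_
  change pushoutDescVal u v ((Q.map (δ (Fin.last (n + 1)))).toOrderHom x) = _
  have : (x : ℕ) < 2 * n + 2 := x.isLt
  rw [Q_map_δ_last_apply, pushoutDescVal, if_neg (by omega), if_pos (by omega)]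
  exact (val_apply_eq_natApp _ x (by omega)).symm

lemma Q_map_mkOfSucc_last_comp_pushoutDesc :
    Q.map (mkOfSucc (Fin.last n)) ≫ pushoutDesc w = v := by
  obtain ⟨h₀, h₁⟩ := natApp_eq_of_pushout_condition w
  refine hom_ext_val fun x => ?_
  have hx : (x : ℕ) ≤ 3 := Nat.lt_succ_iff.mp x.isLt
  change pushoutDescVal u v _ = _
  rw [val_apply_eq_natApp _ x rfl, val_apply_eq_natApp _ x rfl, natApp_Q_map_mkOfSucc_last hx,
    pushoutDescVal]
  interval_cases (x : ℕ)
  · rfl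
  · exact h₀
  · rw [if_neg (show ¬ 2 ≤ 1 by omega), if_neg (by omega), if_pos (by omega)]
    exact (congrArg _ (by omega)).trans h₁
  · rw [if_neg (show ¬ 3 ≤ 1 by omega), if_neg (by omega), if_neg (by omega)]

lemma eq_pushoutDesc (m : Q.obj ⦋n + 1⦌ ⟶ c) (hu : Q.map (δ (Fin.last (n + 1))) ≫ m = u)
    (hv : Q.map (mkOfSucc (Fin.last n)) ≫ m = v) : m = pushoutDesc w := by
  refine hom_ext_val fun j => ?_
  have : (j : ℕ) < 2 * n + 4 := j.isLt
  rw [val_apply_eq_natApp _ j rfl, natApp_eq_pushoutDescVal m (by omega), hu, hv]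
  rfl

omit w in
lemma isPushout_Q_map :
    IsPushout (Q.map (const ⦋0⦌ ⦋n⦌ (Fin.last n))) (Q.map (const ⦋0⦌ ⦋1⦌ 0))
      (Q.map (δ (Fin.last (n + 1)))) (Q.map (mkOfSucc (Fin.last n))) :=
  IsPushout.of_isColimit (PushoutCocone.IsColimit.mk
    (by
      rw [← Q.map_comp, ← Q.map_comp]
      exact congrArg Q.map (Hom.ext_zero_left _ _ (Fin.ext (δ_last_apply (Fin.last n)))))
    (fun s => pushoutDesc s.condition)
    (fun s => Q_map_δ_last_comp_pushoutDesc s.condition)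
    (fun s => Q_map_mkOfSucc_last_comp_pushoutDesc s.condition)
    (fun s m hu hv => eq_pushoutDesc s.condition m hu hv))

end Pushout

def IsSegal (X : SSet.{0}) : Prop := ∀ n, 2 ≤ n → Function.Bijective (spine X n)

section Segal
variable {X : SSet.{0}}

lemma spine_apply {n : ℕ} (σ : X _⦋n⦌) (i : Fin n) :
    (spine X n σ).1 i = X.map (mkOfSucc i).op σ := by
  rw [← edgeIncl_eq_mkOfSucc]; rfl

lemma spine_ext {n : ℕ} {σ τ : X _⦋n⦌}
    (h : ∀ i, X.map (mkOfSucc i).op σ = X.map (mkOfSucc i).op τ) : spine X n σ = spine X n τ :=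
  Subtype.ext (funext fun i => by simpa only [spine_apply] using h i)

lemma spine_one_bijective (X : SSet.{0}) : Function.Bijective (spine X 1) := by
  refine ⟨fun σ τ h => ?_, fun p => ⟨p.1 0, Subtype.ext (funext fun i => ?_)⟩⟩
  · simpa [spine_apply, Subsingleton.elim (_ : Fin 1) 0] using congrFun (congrArg Subtype.val h) 0
  · simp [spine_apply, Subsingleton.elim i 0]

lemma IsSegal.spine_bijective (hX : IsSegal X) {n : ℕ} (hn : 1 ≤ n) :
    Function.Bijective (spine X n) := by
  obtain rfl | hn := hn.eq_or_lt
  · exact spine_one_bijective X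
  · exact hX n hn

lemma map_mkOfSucc_map_δ_last {n : ℕ} (σ : X _⦋n + 1⦌) (i : Fin n) :
    X.map (mkOfSucc i).op (X.map (δ (Fin.last (n + 1))).op σ) =
      X.map (mkOfSucc i.castSucc).op σ := by
  rw [map_map_apply, mkOfSucc_δ_lt (by simp [Fin.lt_def])]

variable {n : ℕ} (hP : IsPullback (X.map (δ (Fin.last (n + 1))).op)
  (X.map (mkOfSucc (Fin.last n)).op) (X.map (const ⦋0⦌ ⦋n⦌ (Fin.last n)).op)
  (X.map (const ⦋0⦌ ⦋1⦌ 0).op))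
include hP

lemma spine_succ_injective (h : Function.Injective (spine X n)) :
    Function.Injective (spine X (n + 1)) := fun σ τ hστ => by
  have hedge (i : Fin (n + 1)) := by
    simpa only [spine_apply] using congrFun (congrArg Subtype.val hστ) i
  refine Types.ext_of_isPullback hP (h (spine_ext fun i => ?_)) (hedge (Fin.last n))
  rw [map_mkOfSucc_map_δ_last, map_mkOfSucc_map_δ_last, hedge]

lemma spine_succ_surjective (hn : 1 ≤ n) (h : Function.Surjective (spine X n)) :
    Function.Surjective (spine X (n + 1)) := fun p => by
  obtain ⟨σ', hσ'⟩ := h ⟨fun i => p.1 i.castSucc, fun i j hij => p.2 _ _ (by simpa using hij)⟩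
  have hedge (i : Fin n) : X.map (mkOfSucc i).op σ' = p.1 i.castSucc := by
    simpa only [spine_apply] using congrFun (congrArg Subtype.val hσ') i
  have hlast : X.map (const ⦋0⦌ ⦋n⦌ (Fin.last n)).op σ' =
      X.map (const ⦋0⦌ ⦋1⦌ 0).op (p.1 (Fin.last n)) := by
    obtain ⟨i, hi⟩ : ∃ i : Fin n, i.succ = Fin.last n :=
      ⟨⟨n - 1, by omega⟩, Fin.ext (by rw [Fin.val_succ, Fin.val_mk, Fin.val_last]; omega)⟩
    rw [← hi, ← δ_zero_mkOfSucc, ← map_map_apply, hedge, δ_zero_eq_const]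
    exact p.2 _ _ (by simp)
  obtain ⟨σ, hσ₁, hσ₂⟩ := Types.exists_of_isPullback hP σ' _ hlast
  refine ⟨σ, Subtype.ext (funext fun i => ?_)⟩
  rw [spine_apply]
  induction i using Fin.lastCases with
  | last => exact hσ₂
  | cast i => rw [← map_mkOfSucc_map_δ_last, hσ₁, hedge]

omit hP in
theorem isSegal_of_isPullback (hP : ∀ n, IsPullback (X.map (δ (Fin.last (n + 1))).op)
    (X.map (mkOfSucc (Fin.last n)).op) (X.map (const ⦋0⦌ ⦋n⦌ (Fin.last n)).op)
    (X.map (const ⦋0⦌ ⦋1⦌ 0).op)) : IsSegal X := by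
  have (n : ℕ) (hn : 1 ≤ n) : Function.Bijective (spine X n) := by
    induction n, hn using Nat.le_induction with
    | base => exact spine_one_bijective X
    | succ n hn ih =>
      exact ⟨spine_succ_injective (hP n) ih.1, spine_succ_surjective (hP n) hn ih.2⟩
  exact fun n hn => this n (by omega)

end Segal

theorem isSegal_sdF_obj {D : SSet.{0}} (hD : IsDecomp D) : IsSegal (sdF.obj D) :=
  isSegal_of_isPullback fun _ =>
    hD _ _ _ _ isActive_Q_map_const_last isInert_Q_map_const_zero isPushout_Q_map

section SimplexEdges
variable {X : SSet.{0}} {n : ℕ} (σ : X _⦋n⦌)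

def vertexOf (i : Fin (n + 1)) : X _⦋0⦌ := X.map (const ⦋0⦌ ⦋n⦌ i).op σ

def edgeOf (i j : Fin (n + 1)) (h : i ≤ j) : Edge (vertexOf σ i) (vertexOf σ j) :=
  Edge.mk (X.map (mkOfLe i j h).op σ)
    (by rw [SimplicialObject.δ, map_map_apply, δ_one_mkOfLe]; rfl)
    (by rw [SimplicialObject.δ, map_map_apply, δ_zero_mkOfLe]; rfl)

def compStructOf (i j k : Fin (n + 1)) (hij : i ≤ j) (hjk : j ≤ k) :
    (edgeOf σ i j hij).CompStruct (edgeOf σ j k hjk) (edgeOf σ i k (hij.trans hjk)) :=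
  Edge.CompStruct.mk (X.map (mkOfLeComp i j k hij hjk).op σ)
    (by rw [SimplicialObject.δ, map_map_apply, δ_two_mkOfLeComp]; rfl)
    (by rw [SimplicialObject.δ, map_map_apply, δ_zero_mkOfLeComp]; rfl)
    (by rw [SimplicialObject.δ, map_map_apply, δ_one_mkOfLeComp]; rfl)

end SimplexEdges

section Edges
variable {X : SSet.{0}} {x₀ x₁ x₂ y₀ y₁ : X _⦋0⦌}

lemma Edge.src_tgt_eq_of_edge_eq {e : Edge x₀ x₁} {e' : Edge y₀ y₁} (h : e.edge = e'.edge) :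
    x₀ = y₀ ∧ x₁ = y₁ :=
  ⟨e.src_eq.symm.trans (h ▸ e'.src_eq), e.tgt_eq.symm.trans (h ▸ e'.tgt_eq)⟩

lemma Edge.map_vert_one_eq_map_vert_zero {e : Edge x₀ x₁} {f : Edge y₁ x₂} (h : x₁ = y₁) :
    X.map (vert 1 1).op e.edge = X.map (vert 1 0).op f.edge := by
  rw [vert_eq_const, vert_eq_const, ← δ_one_eq_const, ← δ_zero_eq_const]
  exact e.tgt_eq.trans (h.trans f.src_eq.symm)

end Edges

namespace IsSegal
variable {X : SSet.{0}} (hX : IsSegal X) {x₀ x₁ x₂ x₃ : X _⦋0⦌}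
include hX

lemma simplex₂_ext {σ τ : X _⦋2⦌} (h₂ : X.δ 2 σ = X.δ 2 τ) (h₀ : X.δ 0 σ = X.δ 0 τ) :
    σ = τ :=
  (hX 2 le_rfl).1 (spine_ext (Fin.forall_fin_two.2
    ⟨by rw [mkOfSucc_zero_eq_δ]; exact h₂, by rw [mkOfSucc_one_eq_δ]; exact h₀⟩))

lemma exists_compStruct (e : Edge x₀ x₁) (f : Edge x₁ x₂) :
    ∃ g : Edge x₀ x₂, Nonempty (e.CompStruct f g) := by
  obtain ⟨σ, hσ⟩ := (hX 2 le_rfl).2 ⟨![e.edge, f.edge], fun i j hij => by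
    fin_cases i <;> fin_cases j <;>
      first
      | exact absurd hij (by decide)
      | exact Edge.map_vert_one_eq_map_vert_zero rfl⟩
  have h₂ : X.δ 2 σ = e.edge := by
    have := congrFun (congrArg Subtype.val hσ) 0
    rwa [spine_apply, mkOfSucc_zero_eq_δ] at this
  have h₀ : X.δ 0 σ = f.edge := by
    have := congrFun (congrArg Subtype.val hσ) 1
    rwa [spine_apply, mkOfSucc_one_eq_δ] at this
  obtain ⟨y₀, y₁, y₂, e', f', g, h, rfl⟩ := Edge.CompStruct.exists_of_simplex σ
  obtain rfl : y₀ = x₀ := by rw [← e.src_eq, ← e'.src_eq, ← h.d₂, h₂]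
  obtain rfl : y₂ = x₂ := by rw [← f.tgt_eq, ← f'.tgt_eq, ← h.d₀, h₀]
  exact ⟨g, ⟨h.ofEq (h.d₂.symm.trans h₂) (h.d₀.symm.trans h₀) rfl⟩⟩

noncomputable def comp (e : Edge x₀ x₁) (f : Edge x₁ x₂) : Edge x₀ x₂ :=
  (hX.exists_compStruct e f).choose

lemma comp_eq {e : Edge x₀ x₁} {f : Edge x₁ x₂} {g : Edge x₀ x₂} (h : e.CompStruct f g) :
    hX.comp e f = g := by
  obtain ⟨h'⟩ := (hX.exists_compStruct e f).choose_spec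
  have : h'.simplex = h.simplex := hX.simplex₂_ext (h'.d₂.trans h.d₂.symm) (h'.d₀.trans h.d₀.symm)
  exact Edge.ext (h'.d₁.symm.trans (this ▸ h.d₁))

lemma comp_edge_congr {y₀ y₁ y₂ : X _⦋0⦌} {e : Edge x₀ x₁} {f : Edge x₁ x₂}
    {e' : Edge y₀ y₁} {f' : Edge y₁ y₂} (he : e.edge = e'.edge) (hf : f.edge = f'.edge) :
    (hX.comp e f).edge = (hX.comp e' f').edge := by
  obtain ⟨rfl, rfl⟩ := Edge.src_tgt_eq_of_edge_eq he
  obtain ⟨-, rfl⟩ := Edge.src_tgt_eq_of_edge_eq hf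
  rw [Edge.ext he, Edge.ext hf]

lemma comp_edgeOf {n : ℕ} (σ : X _⦋n⦌) (i j k : Fin (n + 1)) (hij : i ≤ j) (hjk : j ≤ k) :
    hX.comp (edgeOf σ i j hij) (edgeOf σ j k hjk) = edgeOf σ i k (hij.trans hjk) :=
  hX.comp_eq (compStructOf σ i j k hij hjk)

lemma comp_assoc (e : Edge x₀ x₁) (f : Edge x₁ x₂) (g : Edge x₂ x₃) :
    hX.comp (hX.comp e f) g = hX.comp e (hX.comp f g) := by
  obtain ⟨τ, hτ⟩ := (hX 3 (by omega)).2 ⟨![e.edge, f.edge, g.edge], fun i j hij => by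
    fin_cases i <;> fin_cases j <;>
      first
      | exact absurd hij (by decide)
      | exact Edge.map_vert_one_eq_map_vert_zero rfl⟩
  have hedge (i : Fin 3) : (edgeOf τ i.castSucc i.succ i.castSucc_le_succ).edge =
      ![e.edge, f.edge, g.edge] i := by
    have := congrFun (congrArg Subtype.val hτ) i
    rwa [spine_apply, mkOfSucc_eq_mkOfLe] at this
  have h₀₁ : (edgeOf τ 0 1 (by decide)).edge = e.edge := hedge 0
  have h₁₂ : (edgeOf τ 1 2 (by decide)).edge = f.edge := hedge 1
  have h₂₃ : (edgeOf τ 2 3 (by decide)).edge = g.edge := hedge 2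
  have h₀₂ : (hX.comp e f).edge = (edgeOf τ 0 2 (by decide)).edge := by
    rw [hX.comp_edge_congr h₀₁.symm h₁₂.symm, hX.comp_edgeOf]
  have h₁₃ : (hX.comp f g).edge = (edgeOf τ 1 3 (by decide)).edge := by
    rw [hX.comp_edge_congr h₁₂.symm h₂₃.symm, hX.comp_edgeOf]
  refine Edge.ext ?_
  rw [hX.comp_edge_congr h₀₂ h₂₃.symm, hX.comp_edgeOf, hX.comp_edge_congr h₀₁.symm h₁₃,
    hX.comp_edgeOf]

end IsSegal

def SegalCat {X : SSet.{0}} (_ : IsSegal X) : Type := X _⦋0⦌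

section SegalCat
variable {X : SSet.{0}} (hX : IsSegal X)

noncomputable instance : SmallCategory (SegalCat hX) where
  Hom x y := Edge (X := X) x y
  id x := Edge.id x
  comp e f := hX.comp e f
  id_comp e := hX.comp_eq (.idComp e)
  comp_id e := hX.comp_eq (.compId e)
  assoc e f g := hX.comp_assoc e f g

lemma SegalCat.eq_eqToHom_comp {a b a' b' : SegalCat hX} (ha : a = a') (hb : b = b')
    {u : a ⟶ b} {v : a' ⟶ b'} (h : Edge.edge u = Edge.edge v) :
    u = eqToHom ha ≫ v ≫ eqToHom hb.symm := by
  subst ha hb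
  simpa using Edge.ext h

lemma SegalCat.composableArrows_ext {n : ℕ} {F G : ComposableArrows (SegalCat hX) n}
    (h₀ : F.obj 0 = G.obj 0)
    (h : ∀ i (hi : i < n), Edge.edge (F.map' i (i + 1)) = Edge.edge (G.map' i (i + 1))) :
    F = G := by
  have hobj (i : Fin (n + 1)) : F.obj i = G.obj i := by
    obtain ⟨i, hi⟩ := i
    induction i with
    | zero => exact h₀
    | succ i _ => exact (Edge.src_tgt_eq_of_edge_eq (h i (by omega))).2
  exact ComposableArrows.ext hobj fun i hi => SegalCat.eq_eqToHom_comp hX (hobj _) (hobj _) (h i hi)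

noncomputable def toNerveObj {n : ℕ} (σ : X _⦋n⦌) : ComposableArrows (SegalCat hX) n where
  obj i := vertexOf σ i
  map {i j} f := edgeOf σ i j (leOfHom f)
  map_id i := Edge.ext (by
    change X.map (mkOfLe i i _).op σ =
      X.map (SimplexCategory.σ 0).op (X.map (const ⦋0⦌ ⦋n⦌ i).op σ)
    rw [map_map_apply]
    exact congrArg (fun f => X.map (Opposite.op f) σ) (Hom.ext_one_left _ _))
  map_comp f g := (hX.comp_edgeOf σ _ _ _ _ _).symm

lemma toNerveObj_map {m n : ℕ} (ψ : ⦋m⦌ ⟶ ⦋n⦌) (σ : X _⦋n⦌) :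
    toNerveObj hX (X.map ψ.op σ) = (nerve (SegalCat hX)).map ψ.op (toNerveObj hX σ) :=
  SegalCat.composableArrows_ext hX (by
    change vertexOf _ 0 = vertexOf σ (ψ.toOrderHom 0)
    rw [vertexOf, vertexOf, map_map_apply, SimplexCategory.const_comp]) fun i hi => by
    change X.map (mkOfLe _ _ _).op (X.map ψ.op σ) = X.map (mkOfLe _ _ _).op σ
    rw [map_map_apply, mkOfLe_comp]
    rfl

lemma edge_toNerveObj_map' {n : ℕ} (σ : X _⦋n⦌) (i : ℕ) (hi : i < n) :
    Edge.edge ((toNerveObj hX σ).map' i (i + 1)) = X.map (mkOfSucc ⟨i, hi⟩).op σ := by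
  rw [mkOfSucc_eq_mkOfLe]; rfl

lemma toNerveObj_bijective (n : ℕ) : Function.Bijective (toNerveObj hX (n := n)) := by
  have vertexOf_zero (σ : X _⦋0⦌) : vertexOf σ 0 = σ := by
    rw [vertexOf, SimplexCategory.const_eq_id, op_id, Functor.map_id_apply]
  rcases Nat.eq_zero_or_pos n with rfl | hn
  · refine ⟨fun σ τ h => ?_, fun F => ⟨F.obj 0, SegalCat.composableArrows_ext hX
      (vertexOf_zero _) fun i hi => absurd hi (Nat.not_lt_zero i)⟩⟩
    rw [← vertexOf_zero σ, ← vertexOf_zero τ]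
    exact congrArg (fun F => F.obj 0) h
  refine ⟨fun σ τ h => (hX.spine_bijective hn).1 (spine_ext fun i => ?_), fun F => ?_⟩
  · rw [← edge_toNerveObj_map' hX σ i i.isLt, ← edge_toNerveObj_map' hX τ i i.isLt, h]
  obtain ⟨σ, hσ⟩ := (hX.spine_bijective hn).2 ⟨fun i => Edge.edge (F.map' i (i + 1)),
    fun i j hij =>
      Edge.map_vert_one_eq_map_vert_zero (congrArg F.obj (Fin.ext (by simp [hij])))⟩
  have hedge (i : ℕ) (hi : i < n) :
      Edge.edge ((toNerveObj hX σ).map' i (i + 1)) = Edge.edge (F.map' i (i + 1)) := by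
    rw [edge_toNerveObj_map' hX σ i hi, ← spine_apply, hσ]
  exact ⟨σ, SegalCat.composableArrows_ext hX (Edge.src_tgt_eq_of_edge_eq (hedge 0 hn)).1 hedge⟩

noncomputable def toNerve : X ⟶ nerve (SegalCat hX) where
  app Δ := TypeCat.ofHom (toNerveObj hX (n := Δ.unop.len))
  naturality _ _ f := by
    ext σ
    exact toNerveObj_map hX f.unop σ

instance isIso_toNerve : IsIso (toNerve hX) := by
  have (Δ : SimplexCategoryᵒᵖ) : IsIso ((toNerve hX).app Δ) :=
    (isIso_iff_bijective _).2 (toNerveObj_bijective hX _)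
  exact NatIso.isIso_of_isIso_app _

end SegalCat

theorem statement2 {D : SSet.{0}} (hD : IsDecomp D) :
    (∀ n : ℕ, 2 ≤ n → Function.Bijective (spine (sdF.obj D) n)) ∧
      ∃ (T : Type) (inst : SmallCategory T), Nonempty (@nerve T inst ≅ sdF.obj D) :=
  ⟨isSegal_sdF_obj hD, _, _, ⟨(asIso (toNerve (isSegal_sdF_obj hD))).symm⟩⟩

end DecompPaper
end

section
/- The degreewise assignment sending a k-simplex ([n_0] → ⋯ → [n_k], σ ∈ X_{n_k}) of N(el(X)) to X(α_k)(σ) ∈ (sd X)_k, where α_k : Q[k] → [n_k] is the k-th vertical map of the unique active ladder A(φ) over the underlying sequence φ, defines a simplicial map Λ_X : N(el(X)) → sd(X) for every simplicial set X, and these maps are natural in X, giving a natural transformation Λ : N ∘ el ⇒ sd of endofunctors of sSet; in degree 0, Λ_X sends an n-simplex σ of X to its long edge X(ρ)(σ), where ρ : [1] → [n] is the unique active map. -/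
open CategoryTheory CategoryTheory.Limits Opposite Simplicial

namespace DecompPaper

/-!
The active ladder over a chain `[n₀] → ⋯ → [n_k]` has an explicit formula: `α_i : Q[i] ⟶ [n_i]`
sends `j′` to the image of `0` and `j` to the image of the top vertex of `[n_j]` under the
composite `[n_j] ⟶ [n_i]`; it is active because `α_i(i′) = 0` and `α_i(i) = n_i`. Checked on
primed and unprimed vertices, the ladder commutes, and for `γ : [m] ⟶ [k]` the ladder `α'` over
the restricted chain `[n_{γ(0)}] → ⋯ → [n_{γ(m)}]` satisfies
`Q(γ) ≫ α_k = α'_m ≫ ([n_{γ(m)}] ⟶ [n_k])`; applied to the simplex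
`σ ∈ X_{n_k}` this identity is exactly the simpliciality of `Λ_X`. Naturality in `X` is that of
`X ⟶ Y`, and in degree `0` the active map `Q[0] = [1] ⟶ [n]` can only be the long edge.
-/

lemma Q_obj_len (n : ℕ) : (Q.obj ⦋n⦌).len = 2 * n + 1 := rfl

-- Reading `Q[n] = [2n+1]` as `n′ < ⋯ < 0′ < 0 < ⋯ < n`, the vertex `j′` is `n - j`
-- and the vertex `j` is `n + 1 + j`.
def primed (n : ℕ) (j : Fin (n + 1)) : Fin ((Q.obj ⦋n⦌).len + 1) :=
  ⟨n - j, by rw [Q_obj_len]; omega⟩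

def unprimed (n : ℕ) (j : Fin (n + 1)) : Fin ((Q.obj ⦋n⦌).len + 1) :=
  ⟨n + 1 + j, by rw [Q_obj_len]; omega⟩

lemma primed_or_unprimed {n : ℕ} (t : Fin ((Q.obj ⦋n⦌).len + 1)) :
    (∃ j, t = primed n j) ∨ ∃ j, t = unprimed n j := by
  have ht : (t : ℕ) < 2 * n + 2 := t.isLt
  by_cases h : (t : ℕ) ≤ n
  · exact .inl ⟨⟨n - t, by omega⟩, Fin.ext (by simp only [primed]; omega)⟩
  · exact .inr ⟨⟨t - (n + 1), by omega⟩, Fin.ext (by simp only [unprimed]; omega)⟩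

lemma comp_toOrderHom_apply {a b c : SimplexCategory} (f : a ⟶ b) (g : b ⟶ c)
    (x : Fin (a.len + 1)) : (f ≫ g).toOrderHom x = g.toOrderHom (f.toOrderHom x) :=
  rfl

lemma Q_hom_ext {n : ℕ} {b : SimplexCategory} {f g : Q.obj ⦋n⦌ ⟶ b}
    (h₁ : ∀ j, f.toOrderHom (primed n j) = g.toOrderHom (primed n j))
    (h₂ : ∀ j, f.toOrderHom (unprimed n j) = g.toOrderHom (unprimed n j)) : f = g := by
  refine SimplexCategory.Hom.ext _ _ (OrderHom.ext _ _ (funext fun t => ?_))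
  obtain ⟨j, rfl⟩ | ⟨j, rfl⟩ := primed_or_unprimed t
  exacts [h₁ j, h₂ j]

lemma Q_map_primed {a b : ℕ} (f : ⦋a⦌ ⟶ ⦋b⦌) (j : Fin (a + 1)) :
    (Q.map f).toOrderHom (primed a j) = primed b (f.toOrderHom j) := by
  ext
  change (Qfun f.toOrderHom ⟨a - j, _⟩ : ℕ) = _
  rw [Qfun_val_le _ _ (Nat.sub_le a j)]
  simp only [primed, natApp_of_le f.toOrderHom (show a - (a - (j : ℕ)) ≤ a by omega)]
  congr 4
  omega

lemma Q_map_unprimed {a b : ℕ} (f : ⦋a⦌ ⟶ ⦋b⦌) (j : Fin (a + 1)) :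
    (Q.map f).toOrderHom (unprimed a j) = unprimed b (f.toOrderHom j) := by
  ext
  change (Qfun f.toOrderHom ⟨a + 1 + j, _⟩ : ℕ) = _
  rw [Qfun_val_gt _ _ (show ¬ a + 1 + (j : ℕ) ≤ a by omega)]
  simp only [unprimed, natApp_of_le f.toOrderHom (show a + 1 + (j : ℕ) - (a + 1) ≤ a by omega)]
  congr 4
  omega

section QHomMk

variable {n : ℕ} {b : SimplexCategory} (u v : Fin (n + 1) → Fin (b.len + 1))

def qHomFun (t : Fin ((Q.obj ⦋n⦌).len + 1)) : Fin (b.len + 1) :=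
  if h : (t : ℕ) ≤ n then u ⟨n - t, by omega⟩
  else v ⟨t - (n + 1), by have : (t : ℕ) < 2 * n + 2 := t.isLt; omega⟩

lemma qHomFun_monotone (hu : Antitone u) (hv : Monotone v) (huv : u 0 ≤ v 0) :
    Monotone (qHomFun u v) := by
  intro s t hst
  have hst : (s : ℕ) ≤ t := hst
  unfold qHomFun
  split_ifs with hs ht ht
  · exact hu (Fin.mk_le_mk.2 (by omega))
  · exact (hu (Fin.zero_le _)).trans (huv.trans (hv (Fin.zero_le _)))
  · omega
  · exact hv (Fin.mk_le_mk.2 (by omega))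

def qHomMk (hu : Antitone u) (hv : Monotone v) (huv : u 0 ≤ v 0) : Q.obj ⦋n⦌ ⟶ b :=
  SimplexCategory.Hom.mk ⟨qHomFun u v, qHomFun_monotone u v hu hv huv⟩

variable {u v} (hu : Antitone u) (hv : Monotone v) (huv : u 0 ≤ v 0)

lemma qHomMk_primed (j : Fin (n + 1)) :
    (qHomMk u v hu hv huv).toOrderHom (primed n j) = u j := by
  change qHomFun u v (primed n j) = u j
  rw [qHomFun, dif_pos (by simp only [primed]; omega)]
  congr 1; ext; simp only [primed]; omega

lemma qHomMk_unprimed (j : Fin (n + 1)) :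
    (qHomMk u v hu hv huv).toOrderHom (unprimed n j) = v j := by
  change qHomFun u v (unprimed n j) = v j
  rw [qHomFun, dif_neg (by simp only [unprimed]; omega)]
  congr 1; ext; simp only [unprimed]; omega

end QHomMk

section ActiveLadder

variable {k : ℕ} (G : ComposableArrows SimplexCategory k)

lemma castLE_isLt_le (i : Fin (k + 1)) (j : Fin (i + 1)) : Fin.castLE i.isLt j ≤ i :=
  Fin.le_def.2 (Nat.le_of_lt_succ j.isLt)

lemma map_homOfLE_trans_apply {a b c : Fin (k + 1)} (hab : a ≤ b) (hbc : b ≤ c)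
    (x : Fin ((G.obj a).len + 1)) :
    (G.map (homOfLE (hab.trans hbc))).toOrderHom x =
      (G.map (homOfLE hbc)).toOrderHom ((G.map (homOfLE hab)).toOrderHom x) := by
  rw [← homOfLE_comp hab hbc, G.map_comp]
  rfl

lemma map_homOfLE_apply_zero_le {a b c : Fin (k + 1)} (hab : a ≤ b) (hbc : b ≤ c) :
    (G.map (homOfLE hbc)).toOrderHom 0 ≤ (G.map (homOfLE (hab.trans hbc))).toOrderHom 0 := by
  rw [map_homOfLE_trans_apply G hab hbc]
  exact (G.map (homOfLE hbc)).toOrderHom.monotone (Fin.zero_le _)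

lemma map_homOfLE_apply_last_le {a b c : Fin (k + 1)} (hab : a ≤ b) (hbc : b ≤ c) :
    (G.map (homOfLE (hab.trans hbc))).toOrderHom (Fin.last _) ≤
      (G.map (homOfLE hbc)).toOrderHom (Fin.last _) := by
  rw [map_homOfLE_trans_apply G hab hbc]
  exact (G.map (homOfLE hbc)).toOrderHom.monotone (Fin.le_last _)

def activeLadder (i : Fin (k + 1)) : Q.obj ⦋i⦌ ⟶ G.obj i :=
  qHomMk (fun j => (G.map (homOfLE (castLE_isLt_le i j))).toOrderHom 0)
    (fun j => (G.map (homOfLE (castLE_isLt_le i j))).toOrderHom (Fin.last _))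
    (fun _ _ h => map_homOfLE_apply_zero_le G ((Fin.castLE_le_castLE_iff i.isLt).2 h) _)
    (fun _ _ h => map_homOfLE_apply_last_le G ((Fin.castLE_le_castLE_iff i.isLt).2 h) _)
    (OrderHom.monotone _ (Fin.zero_le _))

variable {G}

lemma activeLadder_primed (i : Fin (k + 1)) (j : Fin (i + 1)) :
    (activeLadder G i).toOrderHom (primed i j) =
      (G.map (homOfLE (castLE_isLt_le i j))).toOrderHom 0 :=
  qHomMk_primed ..

lemma activeLadder_unprimed (i : Fin (k + 1)) (j : Fin (i + 1)) :
    (activeLadder G i).toOrderHom (unprimed i j) =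
      (G.map (homOfLE (castLE_isLt_le i j))).toOrderHom (Fin.last _) :=
  qHomMk_unprimed ..

lemma isActive_activeLadder (i : Fin (k + 1)) : IsActive (activeLadder G i) := by
  have h₀ : 0 = primed i (Fin.last i) := Fin.ext (by simp [primed])
  have h₁ : Fin.last _ = unprimed i (Fin.last i) :=
    Fin.ext (by simp only [unprimed, Fin.val_last, Q_obj_len]; omega)
  constructor
  · rw [h₀, activeLadder_primed]
    change (G.map (𝟙 i)).toOrderHom 0 = 0
    rw [G.map_id]
    rfl
  · rw [h₁, activeLadder_unprimed]
    change (G.map (𝟙 i)).toOrderHom (Fin.last _) = Fin.last _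
    rw [G.map_id]
    rfl

lemma activeLadder_comm (i : Fin k) :
    Q.map (SimplexCategory.δ (Fin.last ((i : ℕ) + 1))) ≫ activeLadder G i.succ =
      activeLadder G i.castSucc ≫ G.map (homOfLE i.castSucc_le_succ) := by
  have hδ (j : Fin (i + 1)) : (SimplexCategory.δ (Fin.last ((i : ℕ) + 1))).toOrderHom j =
      j.castSucc := Fin.succAbove_last_apply j
  refine Q_hom_ext (fun j => ?_) (fun j => ?_) <;>
    rw [comp_toOrderHom_apply, comp_toOrderHom_apply]
  · rw [Q_map_primed, hδ]
    exact (activeLadder_primed i.succ j.castSucc).trans ((map_homOfLE_trans_apply G _ _ _).trans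
      (congrArg _ (activeLadder_primed i.castSucc j).symm))
  · rw [Q_map_unprimed, hδ]
    exact (activeLadder_unprimed i.succ j.castSucc).trans ((map_homOfLE_trans_apply G _ _ _).trans
      (congrArg _ (activeLadder_unprimed i.castSucc j).symm))

lemma Q_map_comp_activeLadder_last {m : ℕ} (γ : ⦋m⦌ ⟶ ⦋k⦌) :
    Q.map γ ≫ activeLadder G (Fin.last k) =
      activeLadder (G.whiskerLeft (SimplexCategory.toCat.map γ).toFunctor) (Fin.last m) ≫
        G.map (homOfLE (Fin.le_last (γ.toOrderHom (Fin.last m)))) := by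
  let Gγ := G.whiskerLeft (SimplexCategory.toCat.map γ).toFunctor
  refine Q_hom_ext (fun j => ?_) (fun j => ?_) <;> rw [comp_toOrderHom_apply]
  · rw [Q_map_primed]
    exact (activeLadder_primed _ _).trans ((map_homOfLE_trans_apply G _ _ _).trans
      (congrArg _ (activeLadder_primed (G := Gγ) (Fin.last m) j).symm))
  · rw [Q_map_unprimed]
    exact (activeLadder_unprimed _ _).trans ((map_homOfLE_trans_apply G _ _ _).trans
      (congrArg _ (activeLadder_unprimed (G := Gγ) (Fin.last m) j).symm))

end ActiveLadder

lemma IsActive.eq_act1 {n : ℕ} {f : ⦋1⦌ ⟶ ⦋n⦌} (hf : IsActive f) : f = act1 n :=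
  SimplexCategory.Hom.ext_one_left _ _ hf.1 hf.2

def El.proj (X : SSet.{0}) : El X ⥤ SimplexCategory where
  obj e := ⦋e.n⦌
  map f := f.1

def nerveElToSdApp (X : SSet.{0}) {k : ℕ} (F : ComposableArrows (El X) k) :
    X.obj (op (Q.obj ⦋k⦌)) :=
  X.map (activeLadder (F ⋙ El.proj X) (Fin.last k)).op (F.obj (Fin.last k)).σ

lemma nerveElToSdApp_map (X : SSet.{0}) {k m : ℕ} (γ : ⦋m⦌ ⟶ ⦋k⦌)
    (F : ComposableArrows (El X) k) :
    nerveElToSdApp X ((nerve (El X)).map γ.op F) = X.map (Q.map γ).op (nerveElToSdApp X F) := by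
  let G : ComposableArrows SimplexCategory k := F ⋙ El.proj X
  let g := G.map (homOfLE (Fin.le_last (γ.toOrderHom (Fin.last m))))
  have hσ : X.map g.op (F.obj (Fin.last k)).σ = (F.obj (γ.toOrderHom (Fin.last m))).σ :=
    (F.map (homOfLE (Fin.le_last (γ.toOrderHom (Fin.last m))))).2
  calc nerveElToSdApp X ((nerve (El X)).map γ.op F)
      = X.map (activeLadder (G.whiskerLeft (SimplexCategory.toCat.map γ).toFunctor)
          (Fin.last m)).op (X.map g.op (F.obj (Fin.last k)).σ) := by
        rw [hσ]; rfl
    _ = X.map (Q.map γ ≫ activeLadder G (Fin.last k)).op (F.obj (Fin.last k)).σ := by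
        rw [Q_map_comp_activeLadder_last]
        exact (Functor.map_comp_apply X _ _ _).symm
    _ = X.map (Q.map γ).op (nerveElToSdApp X F) := Functor.map_comp_apply X _ _ _

def nerveElToSd (X : SSet.{0}) : nerve (El X) ⟶ sdF.obj X where
  app Δ := TypeCat.ofHom (nerveElToSdApp X)
  naturality _ _ γ := by
    ext F
    exact nerveElToSdApp_map X γ.unop F

lemma nerveElToSd_naturality {X Y : SSet.{0}} (f : X ⟶ Y) :
    nerveElToSd X ≫ sdF.map f =
      nerveFunctor.map (X := Cat.of (El X)) (Y := Cat.of (El Y)) (elMap f).toCatHom ≫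
        nerveElToSd Y := by
  ext Δ F
  exact NatTrans.naturality_apply f _ _

theorem statement11 :
    ∃ Λ : ∀ X : SSet.{0}, nerve (El X) ⟶ sdF.obj X,
      IsLambda Λ ∧
      (∀ {X Y : SSet.{0}} (f : X ⟶ Y),
        Λ X ≫ sdF.map f
          = nerveFunctor.map (X := Cat.of (El X)) (Y := Cat.of (El Y)) (elMap f).toCatHom ≫ Λ Y) ∧
      (∀ (X : SSet.{0}) (F : ComposableArrows (El X) 0),
        (Λ X).app (op (SimplexCategory.mk 0)) F
          = X.map (act1 (F.obj 0).n).op (F.obj 0).σ) := by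
  refine ⟨nerveElToSd, fun X k F => ?_, nerveElToSd_naturality, fun X F => ?_⟩
  · exact ⟨activeLadder (F ⋙ El.proj X), ⟨isActive_activeLadder, activeLadder_comm⟩, rfl⟩
  · exact congrArg (fun g => X.map g.op (F.obj 0).σ)
      (isActive_activeLadder (G := F ⋙ El.proj X) (Fin.last 0)).eq_act1

end DecompPaper
end

section
/- Let D be a decomposition space and p : F → tw(D) a discrete fibration, and let λ_D^*(F) → el(D) be the pullback of p along λ_D : el(D) → tw(D) (a discrete fibration over el(D)). Then the simplicial map Y → D over D corresponding to this discrete fibration under the equivalence between discrete fibrations over el(D) and simplicial maps into D is CULF; in particular, Y is a decomposition space. -/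
/-!
The functor `λ_D` sends every morphism of `el(D)` lying over an active map `φ : e ⟶ e'` to an
identity: the active ladder over `φ` ends in `Q(s⁰)` followed by the active map `[1] ⟶ [n']`, so
`Λ_D` takes the 1-simplex `φ` to the degenerate 1-simplex on `e'`, and a functor is determined
by its nerve. Hence in the pullback `λ_D^* F` a morphism over an active map has an identity
`F`-component, because `p` is a discrete fibration; so an active map out of the image of an object
lifts uniquely. Transported to `el(Y)` along the isomorphism, this unique lifting is the pullback
condition defining CULF. Finally, a pushout of an active map in `Δ` is active, so the
decomposition-space squares of `Y` are obtained from those of `D` by pasting CULF squares.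
-/

open CategoryTheory CategoryTheory.Limits Opposite Simplicial

namespace DecompPaper

/-! ### Decomposition spaces are closed under CULF maps -/

lemma jointly_surjective_of_isPushout {a b c d : SimplexCategory} {f : a ⟶ b} {g : a ⟶ c}
    {h : b ⟶ d} {k : c ⟶ d} (hpo : IsPushout f g h k) (t : Fin (d.len + 1)) :
    (∃ j, h.toOrderHom j = t) ∨ (∃ j, k.toOrderHom j = t) := by
  by_contra! hmiss
  -- `δ t` and `δ (t + 1)` differ exactly at `t`, so they agree after any map missing `t`.
  have agree : ∀ {e : SimplexCategory} (u : e ⟶ d), (∀ j, u.toOrderHom j ≠ t) →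
      u ≫ SimplexCategory.δ t.castSucc = u ≫ SimplexCategory.δ t.succ := by
    intro e u hu
    ext j : 3
    have hne : (u.toOrderHom j : ℕ) ≠ t := fun heq => hu j (Fin.ext heq)
    change t.castSucc.succAbove (u.toOrderHom j) = t.succ.succAbove (u.toOrderHom j)
    simp only [Fin.succAbove, Fin.lt_def, Fin.ext_iff, Fin.val_castSucc, Fin.val_succ]
    split_ifs <;> simp <;> omega
  have hδ := congrArg (fun w : d ⟶ SimplexCategory.mk (d.len + 1) => (w.toOrderHom t : ℕ))
    (hpo.hom_ext (agree h hmiss.1) (agree k hmiss.2))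
  simp [SimplexCategory.δ, Fin.succAbove] at hδ

lemma isActive_of_isPushout {a b c d : SimplexCategory} {f : a ⟶ b} {g : a ⟶ c} {h : b ⟶ d}
    {k : c ⟶ d} (hpo : IsPushout f g h k) (hf : IsActive f) : IsActive k := by
  have hw : ∀ x, h.toOrderHom (f.toOrderHom x) = k.toOrderHom (g.toOrderHom x) := fun x =>
    congrArg (fun w => w.toOrderHom x) hpo.w
  constructor
  · refine le_antisymm ?_ (Fin.zero_le _)
    rcases jointly_surjective_of_isPushout hpo 0 with ⟨j, hj⟩ | ⟨j, hj⟩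
    · calc k.toOrderHom 0
          ≤ k.toOrderHom (g.toOrderHom 0) := k.toOrderHom.monotone (Fin.zero_le _)
        _ = h.toOrderHom 0 := by rw [← hw, hf.1]
        _ ≤ 0 := hj ▸ h.toOrderHom.monotone (Fin.zero_le j)
    · exact hj ▸ k.toOrderHom.monotone (Fin.zero_le j)
  · refine le_antisymm (Fin.le_last _) ?_
    rcases jointly_surjective_of_isPushout hpo (Fin.last d.len) with ⟨j, hj⟩ | ⟨j, hj⟩
    · calc Fin.last d.len
          ≤ h.toOrderHom (Fin.last b.len) := hj ▸ h.toOrderHom.monotone (Fin.le_last j)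
        _ = k.toOrderHom (g.toOrderHom (Fin.last a.len)) := by rw [← hw, hf.2]
        _ ≤ k.toOrderHom (Fin.last c.len) := k.toOrderHom.monotone (Fin.le_last _)
    · exact hj ▸ k.toOrderHom.monotone (Fin.le_last j)

lemma IsCULF.isDecomp {Y X : SSet.{0}} {G : Y ⟶ X} (hG : IsCULF G) (hX : IsDecomp X) :
    IsDecomp Y := by
  intro a b c d f g h k hf hg hpo
  have outer := (hG k (isActive_of_isPushout hpo hf)).paste_vert (hX f g h k hf hg hpo).flip
  rw [← G.naturality h.op, ← G.naturality g.op] at outer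
  refine (IsPullback.of_bot outer ?_ (hG f hf)).flip
  rw [← Y.map_comp, ← Y.map_comp, ← op_comp, ← op_comp, ← hpo.w]

/-! ### `λ` sends active maps to identities -/

lemma eq_act1_of_isActive {n : ℕ} {f : SimplexCategory.mk 1 ⟶ SimplexCategory.mk n}
    (hf : IsActive f) : f = act1 n := by
  ext i : 3
  match i with
  | 0 => exact hf.1
  | 1 => exact hf.2

lemma eq_of_isActive_of_ladder {n n' : ℕ}
    {α : Q.obj (SimplexCategory.mk 1) ⟶ SimplexCategory.mk n'}
    {f : SimplexCategory.mk n ⟶ SimplexCategory.mk n'} (hα : IsActive α) (hf : IsActive f)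
    (hsq : Q.map (SimplexCategory.δ (Fin.last 1)) ≫ α = act1 n ≫ f) :
    α = Q.map (SimplexCategory.σ 0) ≫ act1 n' := by
  have h1 := congrArg (fun w => w.toOrderHom 0) hsq
  have h2 := congrArg (fun w => w.toOrderHom 1) hsq
  ext i : 3
  match i with
  | 0 => exact hα.1
  | 1 => exact h1.trans hf.1
  | 2 => exact h2.trans hf.2
  | 3 => exact hα.2

lemma IsLambda.app_mk₀ {Λ : ∀ X : SSet.{0}, nerve (El X) ⟶ sdF.obj X} (hΛ : IsLambda Λ)
    {X : SSet.{0}} (e : El X) :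
    (Λ X).app (op (SimplexCategory.mk 0)) (ComposableArrows.mk₀ e)
      = X.map (act1 e.n).op e.σ := by
  obtain ⟨α, ⟨hact, -⟩, hval⟩ := hΛ X 0 (ComposableArrows.mk₀ e)
  have hα : (α (Fin.last 0) : SimplexCategory.mk 1 ⟶ SimplexCategory.mk e.n) = act1 e.n :=
    eq_act1_of_isActive (hact _)
  rw [hval, hα]
  rfl

lemma IsLambda.app_mk₁_of_isActive {Λ : ∀ X : SSet.{0}, nerve (El X) ⟶ sdF.obj X}
    (hΛ : IsLambda Λ) {X : SSet.{0}} {e e' : El X} (φ : e ⟶ e') (hφ : IsActive φ.1) :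
    (Λ X).app (op (SimplexCategory.mk 1)) (ComposableArrows.mk₁ φ)
      = (Λ X).app (op (SimplexCategory.mk 1))
          ((nerve (El X)).map (SimplexCategory.σ 0).op (ComposableArrows.mk₀ e')) := by
  obtain ⟨α, ⟨hact, hlad⟩, hval⟩ := hΛ X 1 (ComposableArrows.mk₁ φ)
  have hα₀ : (α 0 : SimplexCategory.mk 1 ⟶ SimplexCategory.mk e.n) = act1 e.n :=
    eq_act1_of_isActive (hact _)
  have hsq : Q.map (SimplexCategory.δ (Fin.last 1)) ≫ α (Fin.last 1) = act1 e.n ≫ φ.1 := by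
    rw [← hα₀]
    exact hlad 0
  have hα₁ : (α (Fin.last 1) : Q.obj (SimplexCategory.mk 1) ⟶ SimplexCategory.mk e'.n)
      = Q.map (SimplexCategory.σ 0) ≫ act1 e'.n :=
    eq_of_isActive_of_ladder (hact _) hφ hsq
  rw [hval, hα₁]
  refine Eq.trans ?_ (NatTrans.naturality_apply (Λ X) (SimplexCategory.σ 0).op _).symm
  rw [hΛ.app_mk₀]
  exact Functor.map_comp_apply X (act1 e'.n).op (Q.map (SimplexCategory.σ (0 : Fin 1))).op e'.σ

lemma comp_eq_comp_of_app_eq {C T : Type} [SmallCategory C] [SmallCategory T] {S : SSet.{0}}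
    (eT : nerve T ≅ S) (lam : C ⥤ T) {Λ : nerve C ⟶ S}
    (hlam : nerveFunctor.map (X := Cat.of C) (Y := Cat.of T) lam.toCatHom ≫ eT.hom = Λ)
    {n : ℕ} {x y : ComposableArrows C n}
    (h : Λ.app (op (SimplexCategory.mk n)) x = Λ.app (op (SimplexCategory.mk n)) y) :
    x ⋙ lam = y ⋙ lam := by
  subst hlam
  exact (eT.app (op (SimplexCategory.mk n))).toEquiv.injective h

lemma map_eq_eqToHom_of_isActive {Λ : ∀ X : SSet.{0}, nerve (El X) ⟶ sdF.obj X}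
    (hΛ : IsLambda Λ) {D : SSet.{0}} {T : Type} [SmallCategory T] (eD : nerve T ≅ sdF.obj D)
    (lam : El D ⥤ T)
    (hlam : nerveFunctor.map (X := Cat.of (El D)) (Y := Cat.of T) lam.toCatHom ≫ eD.hom = Λ D)
    {e e' : El D} (φ : e ⟶ e') (hφ : IsActive φ.1) :
    ∃ h : lam.obj e = lam.obj e', lam.map φ = eqToHom h := by
  have hEq := comp_eq_comp_of_app_eq eD lam hlam (hΛ.app_mk₁_of_isActive φ hφ)
  refine ⟨Functor.congr_obj hEq 0, ?_⟩
  have hmap := Functor.congr_hom hEq (homOfLE (zero_le_one : (0 : Fin 2) ≤ 1))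
  have hid : ((nerve (El D)).map (SimplexCategory.σ 0).op (ComposableArrows.mk₀ e') ⋙ lam).map
      (homOfLE (zero_le_one : (0 : Fin 2) ≤ 1)) = 𝟙 (lam.obj e') := lam.map_id e'
  rw [hid] at hmap
  erw [Category.id_comp, eqToHom_trans] at hmap
  exact hmap

/-! ### Unique lifts of active maps -/

lemma IsDiscreteFibration.eq_of_map_eq_eqToHom {E C : Type*} [Category E] [Category C]
    {p : E ⥤ C} (hp : IsDiscreteFibration p) {x y : E} (u : x ⟶ y) {h : p.obj x = p.obj y}
    (hu : p.map u = eqToHom h) : x = y := by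
  obtain ⟨_, _, huniq⟩ := hp y (p.obj x) (eqToHom h)
  have hx := huniq ⟨x, u⟩ ⟨rfl, by simpa using hu⟩
  have hy := huniq ⟨y, 𝟙 y⟩ ⟨h.symm, by simp⟩
  exact congrArg Sigma.fst (hx.trans hy.symm)

/-- For `P = elMap G` this is the CULF condition on `G`, read in the category of elements. -/
def HasUniqueActiveLifts {E : Type} [SmallCategory E] {X : SSet.{0}} (P : E ⥤ El X) : Prop :=
  ∀ (x : E) (e : El X) (φ : P.obj x ⟶ e), IsActive φ.1 →
    ∃! x' : E, ∃ (h : P.obj x' = e) (ψ : x ⟶ x'), P.map ψ = φ ≫ eqToHom h.symm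

lemma HasUniqueActiveLifts.comp {E E' : Type} [SmallCategory E] [SmallCategory E']
    {X : SSet.{0}} {P : E' ⥤ El X} (hP : HasUniqueActiveLifts P) (Φ : E ⥤ E') [hΦ : Φ.Full]
    (hbij : Function.Bijective Φ.obj) : HasUniqueActiveLifts (Φ ⋙ P) := by
  intro x e φ hφ
  obtain ⟨x'', ⟨h, χ, hχ⟩, huniq⟩ := hP (Φ.obj x) e φ hφ
  obtain ⟨x', rfl⟩ := hbij.2 x''
  refine ⟨x', ⟨h, Φ.preimage χ, by simpa using hχ⟩, ?_⟩
  rintro x₁ ⟨h₁, ψ₁, hψ₁⟩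
  exact hbij.1 (huniq (Φ.obj x₁) ⟨h₁, Φ.map ψ₁, hψ₁⟩)

lemma hasUniqueActiveLifts_pbProj {X : SSet.{0}} {B C : Type} [SmallCategory B] [SmallCategory C]
    {lam : El X ⥤ C} {p : B ⥤ C} (hp : IsDiscreteFibration p)
    (hlam : ∀ {e e' : El X} (φ : e ⟶ e'), IsActive φ.1 →
      ∃ h : lam.obj e = lam.obj e', lam.map φ = eqToHom h) :
    HasUniqueActiveLifts (pbProj lam p) := by
  rintro x e (φ : x.pt ⟶ e) hφ
  obtain ⟨hobj, hmap⟩ := hlam φ hφ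
  refine ⟨⟨e, x.fib, x.eq.trans hobj⟩,
    ⟨rfl, ⟨(φ, 𝟙 x.fib), by simp [hmap]⟩, (Category.comp_id φ).symm⟩, ?_⟩
  rintro ⟨pt, fib, eq⟩ ⟨hpt, ψ, hψ⟩
  change pt = e at hpt
  subst hpt
  have hψ₁ : ψ.1.1 = φ := hψ.trans (Category.comp_id φ)
  obtain ⟨_, hmap'⟩ := hlam ψ.1.1 (hψ₁ ▸ hφ)
  have hfib : x.fib = fib := hp.eq_of_map_eq_eqToHom ψ.1.2
    (h := x.eq.trans (hobj.trans eq.symm)) (by simp [ψ.2, hmap'])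
  subst hfib
  rfl

lemma El.comp_eqToHom_val {X : SSet.{0}} {e e' e'' : El X} (f : e ⟶ e') (h : e' = e'') :
    (f ≫ eqToHom h).1
      = f.1 ≫ eqToHom (congrArg (fun z : El X => SimplexCategory.mk z.n) h) := by
  cases h
  simp

lemma IsCULF.of_hasUniqueActiveLifts {Y X : SSet.{0}} {G : Y ⟶ X}
    (hG : HasUniqueActiveLifts (elMap G)) : IsCULF G := by
  intro a b g hg
  induction b using SimplexCategory.rec with | _ m
  refine (Types.isPullback_iff _ _ _ _).2 ⟨G.naturality g.op, ?_, ?_⟩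
  · rintro y₁ y₂ ⟨hgy, hGy⟩
    obtain ⟨_, _, huniq⟩ := hG ⟨a.len, Y.map g.op y₁⟩ ⟨m, G.app _ y₁⟩
      ⟨g, (NatTrans.naturality_apply G g.op y₁).symm⟩ hg
    have h₁ := huniq ⟨m, y₁⟩ ⟨rfl, ⟨g, rfl⟩, (Category.comp_id _).symm⟩
    have h₂ := huniq ⟨m, y₂⟩ ⟨by rw [elMap, hGy], ⟨g, hgy.symm⟩,
      Subtype.ext ((El.comp_eqToHom_val _ _).trans (Category.comp_id g)).symm⟩
    cases h₁.trans h₂.symm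
    rfl
  · intro y σ hyσ
    obtain ⟨⟨n, y'⟩, ⟨h, ψ, hψ⟩, -⟩ :=
      hG ⟨a.len, y⟩ ⟨m, σ⟩ ⟨g, hyσ.symm⟩ hg
    cases h
    have hψ₁ : ψ.1 = g := congrArg Subtype.val (hψ.trans (Category.comp_id _))
    exact ⟨y', hψ₁ ▸ ψ.2, rfl⟩

lemma Cat.bijective_obj_of_iso {C D : Cat} (Ψ : C ≅ D) :
    Function.Bijective Ψ.hom.toFunctor.obj :=
  Function.bijective_iff_has_inverse.2 ⟨Ψ.inv.toFunctor.obj,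
    fun x => congrArg (fun F => F.toFunctor.obj x) Ψ.hom_inv_id,
    fun y => congrArg (fun F => F.toFunctor.obj y) Ψ.inv_hom_id⟩

theorem statement17 {D : SSet.{0}} (hD : IsDecomp D)
    (Λ : ∀ X : SSet.{0}, nerve (El X) ⟶ sdF.obj X) (hΛ : IsLambda Λ)
    (TD : Type) [SmallCategory TD] (eD : nerve TD ≅ sdF.obj D)
    (lamD : El D ⥤ TD)
    (hlam : nerveFunctor.map (X := Cat.of (El D)) (Y := Cat.of TD) lamD.toCatHom ≫ eD.hom = Λ D)
    (F : Type) [SmallCategory F] (p : F ⥤ TD) (hp : IsDiscreteFibration p)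
    (Y : SSet.{0}) (G : Y ⟶ D)
    (Ψ : Cat.of (El Y) ≅ Cat.of (StrictPB lamD p))
    (hΨ : Ψ.hom.toFunctor ⋙ pbProj lamD p = elMap G) :
    IsCULF G ∧ IsDecomp Y := by
  have hlifts : HasUniqueActiveLifts (elMap G) := by
    rw [← hΨ]
    exact (hasUniqueActiveLifts_pbProj hp (map_eq_eqToHom_of_isActive hΛ eD lamD hlam)).comp
      Ψ.hom.toFunctor (hΦ := (Cat.equivOfIso Ψ).full_functor)
      (Cat.bijective_obj_of_iso Ψ)
  have hG := IsCULF.of_hasUniqueActiveLifts hlifts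
  exact ⟨hG, hG.isDecomp hD⟩

end DecompPaper
end
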